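/- In FDE+cmi, the biconditional φ ↔ ψ := (φ → ψ) ∧ (ψ → φ) is designated exactly when φ and ψ are both designated or both undesignated; consequently it does not support substitution of negations: there exist values x, y with x ↔ y designated but ¬x ↔ ¬y undesignated. -/

import Mathlib

/-- Truth values of FDE: T, B (both), N (neither), F. T and B are designated. -/
inductive FDE : Type | T | B | N | F
deriving DecidableEq

instance FDE.instFintype : Fintype FDE :=
  ⟨{FDE.T, FDE.B, FDE.N, FDE.F}, fun x => by cases x <;> decide⟩

namespace FDE

/-- Negation: swaps T and F, fixes B and N. -/
def neg : FDE → FDE | T => F | F => T | B => B | N => N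

/-- Lattice meet (conjunction): F bottom, T top, B and N incomparable. -/
def meet : FDE → FDE → FDE
  | T, y => y | x, T => x
  | F, _ => F | _, F => F
  | B, B => B | N, N => N
  | B, N => F | N, B => F

/-- Lattice join (disjunction). -/
def join : FDE → FDE → FDE
  | F, y => y | x, F => x
  | T, _ => T | _, T => T
  | B, B => B | N, N => N
  | B, N => T | N, B => T

/-- The cmi conditional: value of the consequent if the antecedent is designated
(T or B), and T otherwise. -/
def cmi : FDE → FDE → FDE
  | T, y => y | B, y => y
  | N, _ => T | F, _ => T

/-- Designated values of FDE are T and B. -/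
def designated (x : FDE) : Prop := x = T ∨ x = B

end FDE

/-- The weak biconditional: x ↔ y := (x → y) ∧ (y → x). -/
def FDE.bic (x y : FDE) : FDE := FDE.meet (FDE.cmi x y) (FDE.cmi y x)

/-! Designation is a homomorphism to classical logic: {T, B} is a prime filter, so a meet is
designated iff both arguments are, and `cmi x y` is designated iff designation of `x` implies
that of `y`. Negation is not: it fixes the designated B but sends the designated T to F, so
B ↔ T is designated while ¬B ↔ ¬T = B ↔ F is not. -/

namespace FDE

theorem designated_meet_iff (x y : FDE) :
    designated (meet x y) ↔ designated x ∧ designated y := by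
  cases x <;> cases y <;> simp [designated, meet]

theorem designated_cmi_iff (x y : FDE) :
    designated (cmi x y) ↔ (designated x → designated y) := by
  cases x <;> simp [designated, cmi]

theorem designated_bic_iff (x y : FDE) :
    designated (bic x y) ↔ (designated x ↔ designated y) := by
  rw [bic, designated_meet_iff, designated_cmi_iff, designated_cmi_iff]
  exact iff_iff_implies_and_implies.symm

theorem designated_bic_B_T : designated (bic B T) :=
  (designated_bic_iff B T).2 (iff_of_true (Or.inr rfl) (Or.inl rfl))

theorem not_designated_bic_neg_B_neg_T : ¬ designated (bic (neg B) (neg T)) := by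
  rw [designated_bic_iff, neg, neg]
  simp [designated]

end FDE

/-- x ↔ y is designated exactly when x and y are both designated or both
undesignated; consequently it does not support substitution of negations. -/
theorem fde_bic_designation :
    (∀ x y : FDE, FDE.designated (FDE.bic x y) ↔
      (FDE.designated x ↔ FDE.designated y)) ∧
    ∃ x y : FDE, FDE.designated (FDE.bic x y) ∧
      ¬ FDE.designated (FDE.bic (FDE.neg x) (FDE.neg y)) :=
  ⟨FDE.designated_bic_iff, FDE.B, FDE.T, FDE.designated_bic_B_T,
    FDE.not_designated_bic_neg_B_neg_T⟩
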